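/- Let V1, ..., Vℓ be finite sets and let W be a nonempty set covered by the union of a minimal subfamily C of {V1,...,Vℓ} (minimal meaning no proper subfamily of C covers W). If W is strictly contained in the union V_C of the sets in C, then there exist elements v_in ∈ W and v_out ∈ V_C \ W such that every set in C containing v_in also contains v_out. -/
import Mathlib


theorem stmt_12 {α : Type*} [DecidableEq α] (C : Finset (Finset α)) (W : Finset α)
    (hW : W.Nonempty)
    (hcover : W ⊆ C.biUnion id)
    (hmin : ∀ C' : Finset (Finset α), C' ⊂ C → ¬ W ⊆ C'.biUnion id)
    (hstrict : W ⊂ C.biUnion id) :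
    ∃ v_in ∈ W, ∃ v_out ∈ C.biUnion id, v_out ∉ W ∧
      ∀ S ∈ C, v_in ∈ S → v_out ∈ S := by
  obtain ⟨u, huC, huW⟩ := Finset.exists_of_ssubset hstrict
  obtain ⟨S0, hS0, huS0⟩ := Finset.mem_biUnion.mp huC
  have herase : C.erase S0 ⊂ C := Finset.erase_ssubset hS0
  have hnc := hmin (C.erase S0) herase
  rw [Finset.not_subset] at hnc
  obtain ⟨w, hwW, hwn⟩ := hnc
  refine ⟨w, hwW, u, huC, huW, fun S hS hwS => ?_⟩
  have : S = S0 := by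
    by_contra h
    exact hwn (Finset.mem_biUnion.mpr ⟨S, Finset.mem_erase.mpr ⟨h, hS⟩, hwS⟩)
  rwa [this]
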